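/- The square root of the Gromov–Wasserstein cost satisfies the triangle inequality: for compact metric measure spaces 𝕏, 𝕐, ℤ, GW(𝕏,ℤ)^{1/2} ≤ GW(𝕏,𝕐)^{1/2} + GW(𝕐,ℤ)^{1/2}. -/

import Mathlib

/-
Glue a coupling π₁ of (μ, ν) and a coupling π₂ of (ν, ρ) along ν, by disintegrating both
over the middle space, into a measure m on Y × X × Z; its (X, Z)-marginal couples μ and ρ. Over
m ⊗ m the distortion d(x, x') - d(z, z') is the sum of d(x, x') - d(y, y') and
d(y, y') - d(z, z'), whose squared L² norms are the costs of π₁ and π₂, so Minkowski's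
inequality in L²(m ⊗ m) bounds the square root of the glued cost by the sum of the square
roots of the two costs. Passing to infima over π₁ and π₂ gives the triangle inequality.
-/

open MeasureTheory ProbabilityTheory

/-- The Gromov--Wasserstein quadratic cost of a plan `π`. -/
noncomputable def GWcost {X Y : Type*} [MetricSpace X] [MetricSpace Y]
    [MeasurableSpace X] [MeasurableSpace Y] (π : Measure (X × Y)) : ℝ :=
  ∫ p, ∫ q, (dist p.1 q.1 - dist p.2 q.2) ^ 2 ∂π ∂π

/-- The Gromov--Wasserstein value between two metric measure spaces. -/
noncomputable def GWval {X Y : Type*} [MetricSpace X] [MetricSpace Y]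
    [MeasurableSpace X] [MeasurableSpace Y] (μ : Measure X) (ν : Measure Y) : ℝ :=
  sInf (GWcost '' {π : Measure (X × Y) | IsProbabilityMeasure π ∧
    π.map Prod.fst = μ ∧ π.map Prod.snd = ν})

def couplings {X Y : Type*} [MeasurableSpace X] [MeasurableSpace Y] (μ : Measure X)
    (ν : Measure Y) : Set (Measure (X × Y)) :=
  {π | IsProbabilityMeasure π ∧ π.map Prod.fst = μ ∧ π.map Prod.snd = ν}

lemma couplings_nonempty {X Y : Type*} [MeasurableSpace X] [MeasurableSpace Y]
    (μ : Measure X) (ν : Measure Y) [IsProbabilityMeasure μ] [IsProbabilityMeasure ν] :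
    (couplings μ ν).Nonempty :=
  ⟨μ.prod ν, inferInstance, Measure.fst_prod, Measure.snd_prod⟩

lemma GWcost_nonneg {X Y : Type*} [MetricSpace X] [MetricSpace Y]
    [MeasurableSpace X] [MeasurableSpace Y] (π : Measure (X × Y)) : 0 ≤ GWcost π :=
  integral_nonneg fun _ => integral_nonneg fun _ => sq_nonneg _

lemma bddBelow_GWcost_image {X Y : Type*} [MetricSpace X] [MetricSpace Y]
    [MeasurableSpace X] [MeasurableSpace Y] (s : Set (Measure (X × Y))) :
    BddBelow (GWcost '' s) :=
  ⟨0, by rintro _ ⟨π, -, rfl⟩; exact GWcost_nonneg π⟩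

section Minkowski

variable {α : Type*} [MeasurableSpace α] {μ : Measure α}

lemma sqrt_integral_sq_eq_norm_toLp {F : α → ℝ} (hF : MemLp F 2 μ) :
    √(∫ a, F a ^ 2 ∂μ) = ‖hF.toLp F‖ := by
  rw [← Real.sqrt_sq (norm_nonneg _), ← real_inner_self_eq_norm_sq, L2.inner_def]
  congr 1
  refine integral_congr_ae (hF.coeFn_toLp.mono fun a ha => ?_)
  simp [ha, sq]

lemma sqrt_integral_add_sq_le {F G : α → ℝ} (hF : MemLp F 2 μ) (hG : MemLp G 2 μ) :
    √(∫ a, (F a + G a) ^ 2 ∂μ) ≤ √(∫ a, F a ^ 2 ∂μ) + √(∫ a, G a ^ 2 ∂μ) := by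
  rw [sqrt_integral_sq_eq_norm_toLp hF, sqrt_integral_sq_eq_norm_toLp hG]
  calc √(∫ a, (F a + G a) ^ 2 ∂μ) = ‖(hF.add hG).toLp (F + G)‖ :=
        sqrt_integral_sq_eq_norm_toLp (hF.add hG)
    _ ≤ ‖hF.toLp F‖ + ‖hG.toLp G‖ := by
        rw [MemLp.toLp_add]; exact norm_add_le _ _

end Minkowski

lemma sqrt_sInf_le_sqrt_sInf_add_sqrt_sInf {A B C : Set ℝ} (hA : A.Nonempty)
    (hB : B.Nonempty) (hA' : BddBelow A) (hB' : BddBelow B) (hC : BddBelow C)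
    (h : ∀ a ∈ A, ∀ b ∈ B, ∃ c ∈ C, √c ≤ √a + √b) :
    √(sInf C) ≤ √(sInf A) + √(sInf B) := by
  have sqrt_csInf {S : Set ℝ} (hS : S.Nonempty) (hS' : BddBelow S) :
      √(sInf S) = sInf (Real.sqrt '' S) :=
    Monotone.map_csInf_of_continuousAt Real.continuous_sqrt.continuousAt
      (fun _ _ => Real.sqrt_le_sqrt) hS hS'
  rw [sqrt_csInf hA hA', sqrt_csInf hB hB', ← sub_le_iff_le_add]
  refine le_csInf (hA.image _) ?_
  rintro _ ⟨a, ha, rfl⟩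
  rw [sub_le_comm]
  refine le_csInf (hB.image _) ?_
  rintro _ ⟨b, hb, rfl⟩
  obtain ⟨c, hc, hca⟩ := h a ha b hb
  linarith [Real.sqrt_le_sqrt (csInf_le hC hc)]

lemma map_compProd_prod_fst {α β γ : Type*} [MeasurableSpace α] [MeasurableSpace β]
    [MeasurableSpace γ] (μ : Measure α) [SFinite μ] (κ : Kernel α β) (η : Kernel α γ)
    [IsSFiniteKernel κ] [IsMarkovKernel η] :
    (μ ⊗ₘ (κ ×ₖ η)).map (fun p => (p.1, p.2.1)) = μ ⊗ₘ κ := by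
  have h := Measure.compProd_map (μ := μ) (κ := κ ×ₖ η) measurable_fst
  rw [← Kernel.fst_eq, Kernel.fst_prod] at h
  exact h.symm

lemma map_compProd_prod_snd {α β γ : Type*} [MeasurableSpace α] [MeasurableSpace β]
    [MeasurableSpace γ] (μ : Measure α) [SFinite μ] (κ : Kernel α β) (η : Kernel α γ)
    [IsMarkovKernel κ] [IsSFiniteKernel η] :
    (μ ⊗ₘ (κ ×ₖ η)).map (fun p => (p.1, p.2.2)) = μ ⊗ₘ η := by
  have h := Measure.compProd_map (μ := μ) (κ := κ ×ₖ η) measurable_snd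
  rw [← Kernel.snd_eq, Kernel.snd_prod] at h
  exact h.symm

theorem exists_gluing {X Y Z : Type*} [MeasurableSpace X] [StandardBorelSpace X]
    [MeasurableSpace Y] [MeasurableSpace Z] [StandardBorelSpace Z]
    (π₁ : Measure (X × Y)) (π₂ : Measure (Y × Z)) [IsProbabilityMeasure π₁]
    [IsProbabilityMeasure π₂] (h : π₁.snd = π₂.fst) :
    ∃ m : Measure (Y × X × Z), IsProbabilityMeasure m ∧
      m.map (fun p => (p.2.1, p.1)) = π₁ ∧ m.map (fun p => (p.1, p.2.2)) = π₂ := by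
  have : Nonempty X := (nonempty_of_isProbabilityMeasure π₁).map Prod.fst
  have : Nonempty Z := (nonempty_of_isProbabilityMeasure π₂).map Prod.snd
  set σ₁ := π₁.map Prod.swap
  have hσ₁ : σ₁.fst = π₂.fst := by rw [← h, Measure.fst_map_swap]
  refine ⟨π₂.fst ⊗ₘ (σ₁.condKernel ×ₖ π₂.condKernel), inferInstance, ?_, ?_⟩
  · have hfst : (fun p : Y × X × Z => (p.2.1, p.1)) = Prod.swap ∘ fun p => (p.1, p.2.1) := rfl
    rw [hfst, ← Measure.map_map measurable_swap (by fun_prop), map_compProd_prod_fst, ← hσ₁,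
      σ₁.disintegrate, Measure.map_map measurable_swap measurable_swap, Prod.swap_swap_eq,
      Measure.map_id]
  · rw [map_compProd_prod_snd, π₂.disintegrate]

lemma GWcost_map {W S T : Type*} [MeasurableSpace W] [MetricSpace S] [CompactSpace S]
    [MeasurableSpace S] [BorelSpace S] [MetricSpace T] [CompactSpace T] [MeasurableSpace T]
    [BorelSpace T] (m : Measure W) [IsFiniteMeasure m] {g : W → S × T} (hg : Measurable g) :
    GWcost (m.map g) =
      ∫ w, (dist (g w.1).1 (g w.2).1 - dist (g w.1).2 (g w.2).2) ^ 2 ∂(m.prod m) := by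
  have hc : Continuous fun z : (S × T) × (S × T) =>
      (dist z.1.1 z.2.1 - dist z.1.2 z.2.2) ^ 2 := by
    fun_prop
  rw [GWcost, integral_integral (hc.integrable_of_hasCompactSupport
      (HasCompactSupport.of_compactSpace _)), Measure.map_prod_map _ _ hg hg,
    integral_map (hg.prodMap hg).aemeasurable hc.aestronglyMeasurable]
  rfl

theorem exists_mem_couplings_sqrt_GWcost_le {X Y Z : Type*}
    [MetricSpace X] [CompactSpace X] [MeasurableSpace X] [BorelSpace X]
    [MetricSpace Y] [CompactSpace Y] [MeasurableSpace Y] [BorelSpace Y]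
    [MetricSpace Z] [CompactSpace Z] [MeasurableSpace Z] [BorelSpace Z]
    {μ : Measure X} {ν : Measure Y} {ρ : Measure Z}
    {π₁ : Measure (X × Y)} {π₂ : Measure (Y × Z)} (h₁ : π₁ ∈ couplings μ ν)
    (h₂ : π₂ ∈ couplings ν ρ) :
    ∃ π ∈ couplings μ ρ, √(GWcost π) ≤ √(GWcost π₁) + √(GWcost π₂) := by
  obtain ⟨_, hμ, hν₁⟩ := h₁
  obtain ⟨_, hν₂, hρ⟩ := h₂
  obtain ⟨m, _, hm₁, hm₂⟩ := exists_gluing π₁ π₂ (hν₁.trans hν₂.symm)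
  have hmeas : Measurable fun p : Y × X × Z => p.2 := measurable_snd
  refine ⟨m.map Prod.snd, ⟨Measure.isProbabilityMeasure_map hmeas.aemeasurable, ?_, ?_⟩, ?_⟩
  · rw [Measure.map_map measurable_fst hmeas, ← hμ, ← hm₁,
      Measure.map_map measurable_fst (by fun_prop)]
    rfl
  · rw [Measure.map_map measurable_snd hmeas, ← hρ, ← hm₂,
      Measure.map_map measurable_snd (by fun_prop)]
    rfl
  have hL2 {F : (Y × X × Z) × (Y × X × Z) → ℝ} (hF : Continuous F) : MemLp F 2 (m.prod m) :=
    hF.memLp_of_hasCompactSupport (HasCompactSupport.of_compactSpace _)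
  have hxy := hL2 (F := fun w => dist w.1.2.1 w.2.2.1 - dist w.1.1 w.2.1) (by fun_prop)
  have hyz := hL2 (F := fun w => dist w.1.1 w.2.1 - dist w.1.2.2 w.2.2.2) (by fun_prop)
  rw [← hm₁, ← hm₂, GWcost_map m hmeas, GWcost_map m (by fun_prop), GWcost_map m (by fun_prop)]
  convert sqrt_integral_add_sq_le hxy hyz using 4
  ring

/-- Triangle inequality for the square root of the Gromov--Wasserstein cost. -/
theorem gw_sqrt_triangle {X Y Z : Type*}
    [MetricSpace X] [CompactSpace X] [MeasurableSpace X] [BorelSpace X]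
    [MetricSpace Y] [CompactSpace Y] [MeasurableSpace Y] [BorelSpace Y]
    [MetricSpace Z] [CompactSpace Z] [MeasurableSpace Z] [BorelSpace Z]
    (μ : Measure X) (ν : Measure Y) (ρ : Measure Z)
    [IsProbabilityMeasure μ] [IsProbabilityMeasure ν] [IsProbabilityMeasure ρ] :
    Real.sqrt (GWval μ ρ) ≤ Real.sqrt (GWval μ ν) + Real.sqrt (GWval ν ρ) := by
  refine sqrt_sInf_le_sqrt_sInf_add_sqrt_sInf ((couplings_nonempty μ ν).image GWcost)
    ((couplings_nonempty ν ρ).image GWcost) (bddBelow_GWcost_image _)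
    (bddBelow_GWcost_image _) (bddBelow_GWcost_image _) ?_
  rintro _ ⟨π₁, h₁, rfl⟩ _ ⟨π₂, h₂, rfl⟩
  obtain ⟨π, hπ, hle⟩ := exists_mem_couplings_sqrt_GWcost_le h₁ h₂
  exact ⟨GWcost π, ⟨π, hπ, rfl⟩, hle⟩
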